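/- Let N ≥ 1, l ≤ L be natural numbers, let h : Fin (l+1) → ℂ be a nonzero channel tap vector, and let T be the associated N × (N+L) banded Toeplitz matrix. Then there exists a semi-unitary precoder E ∈ Matrix (Fin (N+L)) (Fin L) ℂ, i.e. Eᴴ·E = I_L, such that T·E = 0 and the span of the columns of E equals the kernel of T. -/

import Mathlib

open Matrix

/-- The `N × (N+L)` banded Toeplitz channel matrix built from the taps `h`:
`T i j = h (L + i - j)` when `0 ≤ L + i - j ≤ l`, and `0` otherwise. -/
noncomputable def bandedToeplitz (N l L : ℕ) (h : Fin (l + 1) → ℂ) :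
    Matrix (Fin N) (Fin (N + L)) ℂ :=
  Matrix.of fun i j =>
    if hij : j.val ≤ L + i.val ∧ L + i.val - j.val ≤ l then
      h ⟨L + i.val - j.val, by omega⟩
    else 0

/-! If `k` is the last nonzero tap, the columns `L + j - k` (`j < N`) of `T` form an upper
triangular `N × N` block with constant diagonal `h k`, so `T` has full row rank `N` and its kernel
has dimension `L`. An orthonormal basis of that kernel, read in `EuclideanSpace`, gives the columns
of `E`: orthonormality is `Eᴴ * E = 1`, and the columns lie in the kernel, so `T * E = 0`. -/

theorem exists_ne_zero_forall_gt_eq_zero {α M : Type*} [Fintype α] [LinearOrder α] [Zero M]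
    {f : α → M} (hf : f ≠ 0) : ∃ k, f k ≠ 0 ∧ ∀ m, k < m → f m = 0 := by
  classical
  obtain ⟨k₀, hk₀⟩ := Function.ne_iff.mp hf
  obtain ⟨k, hk, hmax⟩ :=
    (Finset.univ.filter (f · ≠ 0)).exists_max_image id ⟨k₀, by simpa using hk₀⟩
  exact ⟨k, (Finset.mem_filter.mp hk).2, fun m hkm => by_contra fun hm =>
    (hmax m (by simpa using hm)).not_gt hkm⟩

theorem Submodule.exists_conjTranspose_mul_self_eq_one_and_span_eq
    {𝕜 n : Type*} [RCLike 𝕜] [Fintype n] {m : ℕ} (K : Submodule 𝕜 (n → 𝕜))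
    (hK : Module.finrank 𝕜 K = m) :
    ∃ E : Matrix n (Fin m) 𝕜, Eᴴ * E = 1 ∧ Submodule.span 𝕜 (Set.range Eᵀ) = K := by
  classical
  let e := WithLp.linearEquiv 2 𝕜 (n → 𝕜)
  let K' := K.comap e.toLinearMap
  let b := (stdOrthonormalBasis 𝕜 K').reindex (finCongr ((e.ofSubmodule' K).finrank_eq.trans hK))
  let v : Fin m → EuclideanSpace 𝕜 n := fun j => b j
  refine ⟨of fun i j => v j i, ?_, ?_⟩
  · exact (gram_eq_conjTranspose_mul (EuclideanSpace.basisFun n 𝕜) v).symm.trans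
      (gram_eq_one_iff_orthonormal.mpr (b.orthonormal.comp_linearIsometry K'.subtypeₗᵢ))
  · have hcols : (of fun i j => v j i)ᵀ = (e.toLinearMap ∘ₗ K'.subtype) ∘ b := rfl
    rw [hcols, Set.range_comp, ← Submodule.map_span, ← b.coe_toBasis, b.toBasis.span_eq,
      Submodule.map_top, LinearMap.range_comp, Submodule.range_subtype,
      Submodule.map_comap_eq_of_surjective e.surjective]

section BandedToeplitz

variable {N l L : ℕ} {h : Fin (l + 1) → ℂ}

theorem bandedToeplitz_apply_of_add_eq {i : Fin N} {j : Fin (N + L)} {m : Fin (l + 1)}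
    (hm : j.val + m = L + i) : bandedToeplitz N l L h i j = h m := by
  rw [bandedToeplitz, of_apply, dif_pos (by omega)]
  congr
  omega

theorem bandedToeplitz_apply_eq_zero_of_lt {i : Fin N} {j : Fin (N + L)} {k : Fin (l + 1)}
    (hk : ∀ m, k < m → h m = 0) (hij : j.val + k < L + i) : bandedToeplitz N l L h i j = 0 := by
  rw [bandedToeplitz, of_apply]
  split_ifs with hband
  · exact hk _ (Fin.lt_def.mpr (by simp only; omega))
  · rfl

theorem rank_bandedToeplitz (hlL : l ≤ L) (hh : h ≠ 0) : (bandedToeplitz N l L h).rank = N := by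
  obtain ⟨k, hk, hlast⟩ := exists_ne_zero_forall_gt_eq_zero hh
  let c : Fin N → Fin (N + L) := fun j => ⟨L + j - k, by omega⟩
  let B := (bandedToeplitz N l L h).submatrix id c
  have hB : B.IsUpperTriangular := fun i j hji =>
    bandedToeplitz_apply_eq_zero_of_lt hlast (by dsimp only [c, id] at hji ⊢; omega)
  have hdiag (i : Fin N) : B i i = h k :=
    bandedToeplitz_apply_of_add_eq (by dsimp only [c, id]; omega)
  have hdet : B.det = h k ^ N := by
    rw [det_of_isUpperTriangular hB, Finset.prod_congr rfl fun i _ => hdiag i,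
      Finset.prod_const, Finset.card_univ, Fintype.card_fin]
  refine le_antisymm (rank_le_height _) ?_
  calc N = B.rank := by rw [rank_of_det_ne_zero (hdet ▸ pow_ne_zero N hk), Fintype.card_fin]
    _ ≤ _ := rank_submatrix_le _ _ _

theorem finrank_ker_bandedToeplitz (hlL : l ≤ L) (hh : h ≠ 0) :
    Module.finrank ℂ (LinearMap.ker (bandedToeplitz N l L h).mulVecLin) = L := by
  have hsum := LinearMap.finrank_range_add_finrank_ker (bandedToeplitz N l L h).mulVecLin
  have hrange : Module.finrank ℂ (LinearMap.range (bandedToeplitz N l L h).mulVecLin) = N :=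
    rank_bandedToeplitz hlL hh
  rw [Module.finrank_fin_fun] at hsum
  omega

end BandedToeplitz

theorem exists_semiUnitary_precoder_general (N l L : ℕ) (hlL : l ≤ L)
    (h : Fin (l + 1) → ℂ) (hh : h ≠ 0) :
    ∃ E : Matrix (Fin (N + L)) (Fin L) ℂ,
      Eᴴ * E = 1 ∧
      bandedToeplitz N l L h * E = 0 ∧
      Submodule.span ℂ (Set.range Eᵀ) =
        LinearMap.ker (bandedToeplitz N l L h).mulVecLin := by
  obtain ⟨E, hunitary, hspan⟩ := Submodule.exists_conjTranspose_mul_self_eq_one_and_span_eq _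
    (finrank_ker_bandedToeplitz hlL hh)
  refine ⟨E, hunitary, ?_, hspan⟩
  ext i j
  have hcol : Eᵀ j ∈ LinearMap.ker (bandedToeplitz N l L h).mulVecLin :=
    hspan ▸ Submodule.subset_span ⟨j, rfl⟩
  exact congrFun (LinearMap.mem_ker.mp hcol) i

/-- there exists a semi-unitary precoder `E` (`Eᴴ·E = I_L`) with
`T·E = 0` whose column span is exactly the kernel of `T`. -/
theorem exists_semiUnitary_precoder (N l L : ℕ) (hN : 1 ≤ N) (hlL : l ≤ L)
    (h : Fin (l + 1) → ℂ) (hh : h ≠ 0) :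
    ∃ E : Matrix (Fin (N + L)) (Fin L) ℂ,
      Eᴴ * E = 1 ∧
      bandedToeplitz N l L h * E = 0 ∧
      Submodule.span ℂ (Set.range Eᵀ) =
        LinearMap.ker (bandedToeplitz N l L h).mulVecLin :=
  exists_semiUnitary_precoder_general N l L hlL h hh
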